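/- Let R be a finite commutative Frobenius ring of characteristic 2, let G be a finite group of order n with a fixed enumeration of its elements identifying indices with Z/nZ, let v1, v2 ∈ RG, and let A be an n×n reverse circulant matrix over R. Then the code C_σ generated by the rows of M(σ) is a self-dual code of length 4n if and only if (σ(v1+v2)+A)(σ((v1+v2)*)+A) = I_n and σ(v1)(σ((v1+v2)*)+A) = (σ(v1+v2)+A)σ(v1*). -/

import Mathlib

/-!
A generator matrix `(I | X)` spans a self-dual code exactly when `X Xᵀ = -1`: self-orthogonality
of the rows is `I + X Xᵀ = 0`, and conversely a word `(a, b)` orthogonal to every row has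
`a = -X b`, so it equals `a (I | X)` because `XᵀX = -1` as well.
For `X = [[B, C], [C, B]]` in characteristic 2, `X Xᵀ = 1` splits into `BBᵀ + CCᵀ = 1` and
`BCᵀ = CBᵀ`, which are the two stated equations for `B + C`, since `σ(v)ᵀ = σ(v*)` and a reverse
circulant `A` is symmetric.
-/

open Matrix

/-- The dual of a code (submodule of `ι → R`) with respect to the standard bilinear form. -/
def dualCode {R : Type*} [CommRing R] {ι : Type*} [Fintype ι]
    (C : Submodule R (ι → R)) : Submodule R (ι → R) where
  carrier := {x | ∀ c ∈ C, ∑ i, x i * c i = 0}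
  add_mem' := by
    intro a b ha hb c hc
    simp only [Set.mem_setOf_eq] at ha hb ⊢
    simp [Pi.add_apply, add_mul, Finset.sum_add_distrib, ha c hc, hb c hc]
  zero_mem' := by
    intro c hc
    simp
  smul_mem' := by
    intro r a ha c hc
    simp only [Set.mem_setOf_eq] at ha ⊢
    simp [Pi.smul_apply, smul_eq_mul, mul_assoc, ← Finset.mul_sum, ha c hc]

/-- A code is self-dual if it equals its dual. -/
def IsSelfDual {R : Type*} [CommRing R] {ι : Type*} [Fintype ι]
    (C : Submodule R (ι → R)) : Prop :=
  C = dualCode C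

/-- The code generated by the rows of a matrix. -/
def rowSpan {R : Type*} [CommRing R] {κ ι : Type*} (M : Matrix κ ι R) :
    Submodule R (ι → R) :=
  Submodule.span R (Set.range M)

/-- The matrix `σ(v)` of a group ring element `v` with respect to a fixed enumeration `e`
of the group elements: its `(i,j)` entry is the coefficient of `v` at `(e i)⁻¹ * (e j)`. -/
def sigma {R : Type*} [CommRing R] {G : Type*} [Group G] {ι : Type*}
    (e : ι ≃ G) (v : MonoidAlgebra R G) : Matrix ι ι R :=
  Matrix.of fun i j => v.coeff ((e i)⁻¹ * e j)

/-- The canonical involution `v ↦ v* = ∑ α_g g⁻¹` on a group ring. -/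
def invol {R : Type*} [CommRing R] {G : Type*} [Group G]
    (v : MonoidAlgebra R G) : MonoidAlgebra R G :=
  MonoidAlgebra.ofCoeff (Finsupp.equivMapDomain (Equiv.inv G) v.coeff)

/-- A matrix indexed by `ZMod n` is reverse circulant if its `(i,j)` entry
depends only on `i + j`. -/
def IsRevCirculant {R : Type*} {n : ℕ} (A : Matrix (ZMod n) (ZMod n) R) : Prop :=
  ∃ a : ZMod n → R, ∀ i j, A i j = a (i + j)

/-- A matrix indexed by `ZMod n` is circulant if its `(i,j)` entry
depends only on `j - i`. -/
def IsCirculant {R : Type*} {n : ℕ} (A : Matrix (ZMod n) (ZMod n) R) : Prop :=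
  ∃ a : ZMod n → R, ∀ i j, A i j = a (j - i)

section Codes

variable {R : Type*} [CommRing R] {κ ι : Type*} [Fintype κ]

lemma rowSpan_eq_range_vecMulLinear (M : Matrix κ ι R) :
    rowSpan M = LinearMap.range M.vecMulLinear :=
  (range_vecMulLinear M).symm

lemma mem_rowSpan_iff (M : Matrix κ ι R) (c : ι → R) : c ∈ rowSpan M ↔ ∃ y, y ᵥ* M = c := by
  rw [rowSpan_eq_range_vecMulLinear, LinearMap.mem_range]
  rfl

variable [Fintype ι]

lemma mem_dualCode_rowSpan_iff (M : Matrix κ ι R) (x : ι → R) :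
    x ∈ dualCode (rowSpan M) ↔ M *ᵥ x = 0 := by
  rw [← dotProduct_eq_zero_iff]
  change (∀ c ∈ rowSpan M, x ⬝ᵥ c = 0) ↔ _
  simp only [mem_rowSpan_iff, forall_exists_index, forall_apply_eq_imp_iff, dotProduct_comm x,
    ← dotProduct_mulVec]
  exact forall_congr' fun y => by rw [dotProduct_comm]

lemma rowSpan_le_dualCode_iff (M : Matrix κ ι R) :
    rowSpan M ≤ dualCode (rowSpan M) ↔ M * Mᵀ = 0 := by
  simp only [SetLike.le_def, mem_rowSpan_iff, forall_exists_index, forall_apply_eq_imp_iff,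
    mem_dualCode_rowSpan_iff, mulVec_vecMul, ext_iff_mulVec (B := 0), zero_mulVec]

end Codes

lemma isSelfDual_rowSpan_fromCols_one_iff {R : Type*} [CommRing R] {κ : Type*} [Fintype κ]
    [DecidableEq κ] (X : Matrix κ κ R) :
    IsSelfDual (rowSpan (fromCols (1 : Matrix κ κ R) X)) ↔ X * Xᵀ = -1 := by
  set M := fromCols (1 : Matrix κ κ R) X
  have hM : M * Mᵀ = 1 + X * Xᵀ := by
    rw [transpose_fromCols, fromCols_mul_fromRows, transpose_one, mul_one]
  refine ⟨fun h => ?_, fun hX => le_antisymm ?_ fun x hx => ?_⟩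
  · have h0 := (rowSpan_le_dualCode_iff M).1 h.le
    rw [hM] at h0
    exact eq_neg_of_add_eq_zero_right h0
  · exact (rowSpan_le_dualCode_iff M).2 (by rw [hM, hX, add_neg_cancel])
  · have hXtX : Xᵀ * X = -1 := by
      rw [eq_neg_iff_add_eq_zero, add_eq_zero_iff_neg_eq, ← neg_mul]
      exact mul_eq_one_comm.1 (by rw [mul_neg, hX, neg_neg])
    rw [mem_dualCode_rowSpan_iff, fromCols_mulVec, one_mulVec] at hx
    have hr : x ∘ Sum.inl ᵥ* X = x ∘ Sum.inr := by
      rw [eq_neg_of_add_eq_zero_left hx, neg_vecMul, ← vecMul_transpose, vecMul_vecMul, hXtX,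
        vecMul_neg, vecMul_one, neg_neg]
    refine (mem_rowSpan_iff M x).2 ⟨x ∘ Sum.inl, ?_⟩
    rw [vecMul_fromCols, vecMul_one, hr, Sum.elim_comp_inl_inr]

section CharTwo

variable {R : Type*} [CommRing R] [CharP R 2] {ι : Type*}

lemma Matrix.neg_eq_self_of_charTwo {κ : Type*} (M : Matrix ι κ R) : -M = M := by
  ext i j
  exact CharTwo.neg_eq (M i j)

lemma fromBlocks_mul_transpose_eq_neg_one_iff [Fintype ι] [DecidableEq ι] (B C : Matrix ι ι R) :
    fromBlocks B C C B * (fromBlocks B C C B)ᵀ = -1 ↔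
      (B + C) * (B + C)ᵀ = 1 ∧ B * (B + C)ᵀ = (B + C) * Bᵀ := by
  rw [neg_eq_self_of_charTwo, fromBlocks_transpose, fromBlocks_multiply, ← fromBlocks_one,
    fromBlocks_inj, transpose_add]
  simp only [mul_add, add_mul, add_right_inj]
  have hoff : B * Cᵀ + C * Bᵀ = 0 ↔ B * Cᵀ = C * Bᵀ := by
    rw [add_eq_zero_iff_eq_neg, neg_eq_self_of_charTwo]
  have hexpand :
      B * Bᵀ + C * Bᵀ + (B * Cᵀ + C * Cᵀ) = (B * Bᵀ + C * Cᵀ) + (B * Cᵀ + C * Bᵀ) := by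
    abel
  constructor
  · rintro ⟨hdiag, h0, -, -⟩
    exact ⟨by rw [hexpand, hdiag, h0, add_zero], hoff.1 h0⟩
  · rintro ⟨hsum, hcomm⟩
    have h0 := hoff.2 hcomm
    have hdiag : B * Bᵀ + C * Cᵀ = 1 := by rwa [hexpand, h0, add_zero] at hsum
    exact ⟨hdiag, h0, by rwa [add_comm], by rwa [add_comm]⟩

end CharTwo

section GroupRing

variable {R : Type*} [CommRing R] {G : Type*} [Group G] {ι : Type*}

lemma sigma_add (e : ι ≃ G) (u v : MonoidAlgebra R G) :
    sigma e (u + v) = sigma e u + sigma e v :=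
  rfl

lemma transpose_sigma (e : ι ≃ G) (v : MonoidAlgebra R G) :
    (sigma e v)ᵀ = sigma e (invol v) := by
  ext i j
  simp [sigma, invol, Finsupp.equivMapDomain_apply, _root_.mul_inv_rev]

end GroupRing

lemma IsRevCirculant.isSymm {R : Type*} {n : ℕ} {A : Matrix (ZMod n) (ZMod n) R}
    (hA : IsRevCirculant A) : A.IsSymm := by
  obtain ⟨a, ha⟩ := hA
  ext i j
  rw [transpose_apply, ha, ha, add_comm]

theorem selfDual_sigma_construction_general
    {R : Type*} [CommRing R] [CharP R 2]
    {n : ℕ} [NeZero n] {G : Type*} [Group G] (e : ZMod n ≃ G)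
    (v1 v2 : MonoidAlgebra R G) (A : Matrix (ZMod n) (ZMod n) R)
    (hA : IsRevCirculant A) :
    IsSelfDual (rowSpan (Matrix.fromCols (1 : Matrix (ZMod n ⊕ ZMod n) (ZMod n ⊕ ZMod n) R)
        (Matrix.fromBlocks (sigma e v1) (sigma e v2 + A) (sigma e v2 + A) (sigma e v1)))) ↔
      ((sigma e (v1 + v2) + A) * (sigma e (invol (v1 + v2)) + A) = 1 ∧
        sigma e v1 * (sigma e (invol (v1 + v2)) + A) =
          (sigma e (v1 + v2) + A) * sigma e (invol v1)) := by
  have hsum : sigma e (v1 + v2) + A = sigma e v1 + (sigma e v2 + A) := by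
    rw [sigma_add, add_assoc]
  have hsum_transpose : sigma e (invol (v1 + v2)) + A = (sigma e v1 + (sigma e v2 + A))ᵀ := by
    rw [← hsum, transpose_add, transpose_sigma, hA.isSymm.eq]
  rw [hsum, hsum_transpose, ← transpose_sigma, isSelfDual_rowSpan_fromCols_one_iff,
    fromBlocks_mul_transpose_eq_neg_one_iff]

/-- Theorem 2.2: the code `C_σ` generated by `(I | [[σ(v₁), σ(v₂)+A],[σ(v₂)+A, σ(v₁)]])`
is self-dual iff `(σ(v₁+v₂)+A)(σ((v₁+v₂)*)+A) = I` and
`σ(v₁)(σ((v₁+v₂)*)+A) = (σ(v₁+v₂)+A)σ(v₁*)`. -/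
theorem selfDual_sigma_construction
    {R : Type*} [CommRing R] [Fintype R] [CharP R 2]
    (hFrob : Module.Injective R R)
    {n : ℕ} [NeZero n] {G : Type*} [Group G] [Fintype G] (e : ZMod n ≃ G)
    (v1 v2 : MonoidAlgebra R G) (A : Matrix (ZMod n) (ZMod n) R)
    (hA : IsRevCirculant A) :
    IsSelfDual (rowSpan (Matrix.fromCols (1 : Matrix (ZMod n ⊕ ZMod n) (ZMod n ⊕ ZMod n) R)
        (Matrix.fromBlocks (sigma e v1) (sigma e v2 + A) (sigma e v2 + A) (sigma e v1)))) ↔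
      ((sigma e (v1 + v2) + A) * (sigma e (invol (v1 + v2)) + A) = 1 ∧
        sigma e v1 * (sigma e (invol (v1 + v2)) + A) =
          (sigma e (v1 + v2) + A) * sigma e (invol v1)) :=
  selfDual_sigma_construction_general e v1 v2 A hA
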